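/- For F = ℝ with ψ(x) = e^{2πix}, the Weil index satisfies γ(ψ^η) = e^{πi·sgn(η)/4} for η ∈ ℝ^×; in particular γ(ψ^η) is a primitive 8th root of unity and γ(ψ^η)·γ(ψ^{-η}) = 1. -/

import Mathlib

open MeasureTheory

open Complex Polynomial Filter

noncomputable section

noncomputable section

def gaussianFun : ℝ → ℂ := fun x => Complex.exp (-(Real.pi : ℂ) * (x : ℂ) ^ 2)

lemma gaussianFun_smooth : ContDiff ℝ (⊤ : ℕ∞) gaussianFun := by
  have h1 : ContDiff ℝ (⊤ : ℕ∞) (fun x : ℝ => -(Real.pi : ℂ) * (x : ℂ) ^ 2) :=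
    contDiff_const.mul (ofRealCLM.contDiff.pow 2)
  exact Complex.contDiff_exp.comp h1

lemma gaussianFun_iteratedDeriv (n : ℕ) :
    ∃ p : Polynomial ℂ, ∀ x : ℝ,
      iteratedDeriv n gaussianFun x = p.eval (x : ℂ) * Complex.exp (-(Real.pi : ℂ) * (x : ℂ) ^ 2) := by
  induction n with
  | zero => exact ⟨1, fun x => by simp [gaussianFun]⟩
  | succ n ih =>
    obtain ⟨p, hp⟩ := ih
    refine ⟨p.derivative + Polynomial.C (-2 * (Real.pi : ℂ)) * Polynomial.X * p, fun x => ?_⟩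
    rw [iteratedDeriv_succ]
    have hfun : iteratedDeriv n gaussianFun =
        fun y : ℝ => p.eval (y : ℂ) * Complex.exp (-(Real.pi : ℂ) * (y : ℂ) ^ 2) := funext hp
    rw [hfun]
    have hz : ∀ z : ℂ, HasDerivAt (fun w : ℂ => p.eval w * Complex.exp (-(Real.pi : ℂ) * w ^ 2))
        ((p.derivative.eval z + (-2 * (Real.pi : ℂ)) * z * p.eval z) *
          Complex.exp (-(Real.pi : ℂ) * z ^ 2)) z := by
      intro z
      have h1 : HasDerivAt (fun w : ℂ => p.eval w) (p.derivative.eval z) z := p.hasDerivAt z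
      have h2 : HasDerivAt (fun w : ℂ => -(Real.pi : ℂ) * w ^ 2) (-(Real.pi : ℂ) * (2 * z)) z :=
        (hasDerivAt_pow 2 z).const_mul _ |>.congr_deriv (by ring)
      have h3 := h2.cexp
      have := h1.mul h3
      convert this using 1
      · rfl
      · rfl
      · rfl
      · ring
    have hd := (hz (x : ℂ)).comp_ofReal
    rw [hd.deriv]
    simp only [Polynomial.eval_add, Polynomial.eval_mul, Polynomial.eval_C, Polynomial.eval_X,
      Polynomial.eval_ofNat]
    try ring

def gaussianSchwartz : SchwartzMap ℝ ℂ where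
  toFun := gaussianFun
  smooth' := gaussianFun_smooth.of_le (mod_cast le_top)
  decay' := by
    intro k n
    obtain ⟨p, hp⟩ := gaussianFun_iteratedDeriv n
    set G : ℝ → ℝ := fun x =>
      |x| ^ k * (‖p.eval (x : ℂ)‖ * Real.exp (-Real.pi * x ^ 2)) with hG
    have hGcont : Continuous G := by
      exact ((_root_.continuous_abs.pow k).mul
        ((continuous_norm.comp (p.continuous.comp Complex.continuous_ofReal)).mul
          (Real.continuous_exp.comp (continuous_const.mul (continuous_pow 2)))))
    have hGtend : Tendsto G (cocompact ℝ) (nhds 0) := by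
      have hbound : ∀ x : ℝ, |G x| ≤ ∑ i ∈ Finset.range (p.natDegree + 1),
          ‖p.coeff i‖ * (|x| ^ (k + i) * Real.exp (-Real.pi * x ^ 2)) := by
        intro x
        have h1 : ‖p.eval (x : ℂ)‖ ≤
            ∑ i ∈ Finset.range (p.natDegree + 1), ‖p.coeff i‖ * |x| ^ i := by
          rw [Polynomial.eval_eq_sum_range]
          refine (norm_sum_le _ _).trans ?_
          apply Finset.sum_le_sum
          intro i _
          rw [norm_mul, norm_pow, Complex.norm_real, Real.norm_eq_abs]
        have hGx : G x = |x| ^ k * ‖p.eval (x : ℂ)‖ * Real.exp (-Real.pi * x ^ 2) := by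
          rw [hG]; ring
        rw [_root_.abs_of_nonneg (by rw [hGx]; positivity)]
        rw [hGx]
        calc |x| ^ k * ‖p.eval (x : ℂ)‖ * Real.exp (-Real.pi * x ^ 2)
            ≤ |x| ^ k * (∑ i ∈ Finset.range (p.natDegree + 1),
                ‖p.coeff i‖ * |x| ^ i) * Real.exp (-Real.pi * x ^ 2) := by
              apply mul_le_mul_of_nonneg_right (mul_le_mul_of_nonneg_left h1 (by positivity))
                (Real.exp_nonneg _)
          _ = _ := by
              rw [Finset.mul_sum, Finset.sum_mul]
              exact Finset.sum_congr rfl fun i _ => by ring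
      have hsum : Tendsto (fun x : ℝ => ∑ i ∈ Finset.range (p.natDegree + 1),
          ‖p.coeff i‖ * (|x| ^ (k + i) * Real.exp (-Real.pi * x ^ 2)))
          (cocompact ℝ) (nhds 0) := by
        have : (0 : ℝ) = ∑ i ∈ Finset.range (p.natDegree + 1), ‖p.coeff i‖ * 0 := by
          simp
        rw [this]
        apply tendsto_finset_sum
        intro i _
        apply Tendsto.const_mul
        have h := tendsto_rpow_abs_mul_exp_neg_mul_sq_cocompact Real.pi_pos ((k + i : ℕ) : ℝ)
        refine h.congr fun x => ?_
        rw [Real.rpow_natCast]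
      exact squeeze_zero_norm hbound hsum
    set Z : ZeroAtInftyContinuousMap ℝ ℝ := ⟨⟨G, hGcont⟩, hGtend⟩ with hZ
    refine ⟨‖Z.toBCF‖, fun x => ?_⟩
    have hnorm : ‖iteratedFDeriv ℝ n gaussianFun x‖ = ‖iteratedDeriv n gaussianFun x‖ := by
      rw [← norm_iteratedFDeriv_eq_norm_iteratedDeriv]
    have hG_eq : ‖x‖ ^ k * ‖iteratedFDeriv ℝ n gaussianFun x‖ = G x := by
      rw [hnorm, hp x, hG, Real.norm_eq_abs]
      rw [norm_mul]
      congr 1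
      rw [Complex.norm_exp]
      have hre : -(Real.pi : ℂ) * (x : ℂ) ^ 2 = ((-Real.pi * x ^ 2 : ℝ) : ℂ) := by
        push_cast; ring
      rw [hre, Complex.ofReal_re]
    rw [hG_eq]
    calc G x ≤ |G x| := le_abs_self _
      _ = ‖Z.toBCF x‖ := by rw [Real.norm_eq_abs]; rfl
      _ ≤ ‖Z.toBCF‖ := BoundedContinuousFunction.norm_coe_le_norm _ _

@[simp] lemma gaussianSchwartz_apply (x : ℝ) :
    gaussianSchwartz x = Complex.exp (-(Real.pi : ℂ) * (x : ℂ) ^ 2) := rfl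

def wb1 (η : ℝ) : ℂ := (Real.pi : ℂ) - ((2 * Real.pi * η : ℝ) : ℂ) * Complex.I
def wb2 (η : ℝ) : ℂ := (Real.pi : ℂ) + ((Real.pi / (2 * η) : ℝ) : ℂ) * Complex.I

lemma wb1_re (η : ℝ) : (wb1 η).re = Real.pi := by
  simp [wb1]

lemma wb2_re (η : ℝ) : (wb2 η).re = Real.pi := by
  simp only [wb2, Complex.add_re, Complex.mul_re, Complex.I_re, Complex.I_im,
    Complex.ofReal_re, Complex.ofReal_im]
  ring

lemma wb1_re_pos (η : ℝ) : 0 < (wb1 η).re := by rw [wb1_re]; exact Real.pi_pos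
lemma wb2_re_pos (η : ℝ) : 0 < (wb2 η).re := by rw [wb2_re]; exact Real.pi_pos

lemma ne_zero_of_re_pos' {z : ℂ} (h : 0 < z.re) : z ≠ 0 := by
  intro h0; rw [h0] at h; simp at h

lemma div_pi_re_pos {b : ℂ} (hb : 0 < b.re) : 0 < ((Real.pi : ℂ) / b).re := by
  rw [div_eq_mul_inv, Complex.re_ofReal_mul, Complex.inv_re]
  exact mul_pos Real.pi_pos (div_pos hb (Complex.normSq_pos.mpr (ne_zero_of_re_pos' hb)))

lemma re_cpow_half_pos {a : ℂ} (ha : 0 < a.re) : 0 < (a ^ (1 / 2 : ℂ)).re := by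
  have h2 : (1 / 2 : ℂ) = ((1 / 2 : ℝ) : ℂ) := by norm_num
  rw [h2, Complex.cpow_ofReal_re]
  have harg : |a.arg| < Real.pi / 2 := Complex.abs_arg_lt_pi_div_two_iff.mpr (Or.inl ha)
  rw [abs_lt] at harg
  apply mul_pos (Real.rpow_pos_of_pos (norm_pos_iff.mpr (ne_zero_of_re_pos' ha)) _)
  apply Real.cos_pos_of_mem_Ioo
  constructor <;> [nlinarith [Real.pi_pos]; nlinarith [Real.pi_pos]]

lemma re_cpow_half_div_pos {a b : ℂ} (ha : 0 < a.re) (hb : 0 < b.re) :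
    0 < (a ^ (1 / 2 : ℂ) * (b ^ (1 / 2 : ℂ))⁻¹).re := by
  have h2 : (1 / 2 : ℂ) = ((1 / 2 : ℝ) : ℂ) := by norm_num
  have ha0 : a ≠ 0 := ne_zero_of_re_pos' ha
  have hb0 : b ≠ 0 := ne_zero_of_re_pos' hb
  have hB0 : b ^ ((1 / 2 : ℝ) : ℂ) ≠ 0 := by
    rw [Ne, Complex.cpow_eq_zero_iff]; tauto
  rw [← div_eq_mul_inv, Complex.div_re, h2, Complex.cpow_ofReal_re, Complex.cpow_ofReal_im,
    Complex.cpow_ofReal_re, Complex.cpow_ofReal_im]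
  have hargA : |a.arg| < Real.pi / 2 := Complex.abs_arg_lt_pi_div_two_iff.mpr (Or.inl ha)
  have hargB : |b.arg| < Real.pi / 2 := Complex.abs_arg_lt_pi_div_two_iff.mpr (Or.inl hb)
  rw [abs_lt] at hargA hargB
  have hcos : 0 < Real.cos (a.arg * (1 / 2) - b.arg * (1 / 2)) := by
    apply Real.cos_pos_of_mem_Ioo
    constructor <;> [nlinarith; nlinarith]
  have hra : 0 < ‖a‖ ^ (1 / 2 : ℝ) :=
    Real.rpow_pos_of_pos (norm_pos_iff.mpr ha0) _
  have hrb : 0 < ‖b‖ ^ (1 / 2 : ℝ) :=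
    Real.rpow_pos_of_pos (norm_pos_iff.mpr hb0) _
  have hns : 0 < Complex.normSq (b ^ ((1 / 2 : ℝ) : ℂ)) := Complex.normSq_pos.mpr hB0
  have hkey : ‖a‖ ^ (1 / 2 : ℝ) * Real.cos (a.arg * (1 / 2)) *
        (‖b‖ ^ (1 / 2 : ℝ) * Real.cos (b.arg * (1 / 2))) /
        Complex.normSq (b ^ ((1 / 2 : ℝ) : ℂ)) +
      ‖a‖ ^ (1 / 2 : ℝ) * Real.sin (a.arg * (1 / 2)) *
        (‖b‖ ^ (1 / 2 : ℝ) * Real.sin (b.arg * (1 / 2))) /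
        Complex.normSq (b ^ ((1 / 2 : ℝ) : ℂ)) =
      ‖a‖ ^ (1 / 2 : ℝ) * ‖b‖ ^ (1 / 2 : ℝ) *
        Real.cos (a.arg * (1 / 2) - b.arg * (1 / 2)) / Complex.normSq (b ^ ((1 / 2 : ℝ) : ℂ)) := by
    rw [Real.cos_sub]; ring
  rw [hkey]
  positivity

lemma sq_inj_re_pos {w₁ w₂ : ℂ} (h : w₁ ^ 2 = w₂ ^ 2) (h1 : 0 < w₁.re) (h2 : 0 < w₂.re) :
    w₁ = w₂ := by
  have hz : (w₁ - w₂) * (w₁ + w₂) = 0 := by linear_combination h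
  rcases mul_eq_zero.mp hz with h' | h'
  · exact sub_eq_zero.mp h'
  · exfalso
    have := congrArg Complex.re h'
    simp only [Complex.add_re, Complex.zero_re] at this
    linarith

lemma cpow_half_sq {z : ℂ} : (z ^ (1 / 2 : ℂ)) ^ 2 = z := by
  rw [show (1 / 2 : ℂ) = (((2 : ℕ) : ℂ))⁻¹ by norm_num]
  exact Complex.cpow_nat_inv_pow z two_ne_zero

lemma weil_int1 (η : ℝ) :
    (∫ x : ℝ, gaussianSchwartz x *
        Complex.exp (2 * (Real.pi : ℂ) * Complex.I * (η : ℂ) * (x : ℂ) ^ 2))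
      = ((Real.pi : ℂ) / wb1 η) ^ (1 / 2 : ℂ) := by
  rw [← integral_gaussian_complex (wb1_re_pos η)]
  apply integral_congr_ae
  apply Filter.Eventually.of_forall
  intro x
  dsimp only
  rw [gaussianSchwartz_apply, ← Complex.exp_add]
  congr 1
  simp only [wb1]
  push_cast
  ring

lemma weil_int2 (η x : ℝ) :
    (∫ t : ℝ, gaussianSchwartz t *
        Complex.exp (2 * (Real.pi : ℂ) * Complex.I * (t : ℂ) * (x : ℂ)))
      = Complex.exp (-(Real.pi : ℂ) * (x : ℂ) ^ 2) := by
  have hπ : (0 : ℝ) < ((Real.pi : ℂ)).re := by simp [Real.pi_pos]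
  have h := fourierIntegral_gaussian (b := (Real.pi : ℂ)) hπ (2 * (Real.pi : ℂ) * (x : ℂ))
  have heq : ∀ t : ℝ, gaussianSchwartz t *
      Complex.exp (2 * (Real.pi : ℂ) * Complex.I * (t : ℂ) * (x : ℂ))
      = Complex.exp (Complex.I * (2 * (Real.pi : ℂ) * (x : ℂ)) * (t : ℂ)) *
        Complex.exp (-(Real.pi : ℂ) * (t : ℂ) ^ 2) := by
    intro t
    rw [gaussianSchwartz_apply, mul_comm]
    congr 2
    ring
  calc (∫ t : ℝ, gaussianSchwartz t *
        Complex.exp (2 * (Real.pi : ℂ) * Complex.I * (t : ℂ) * (x : ℂ)))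
      = ∫ t : ℝ, Complex.exp (Complex.I * (2 * (Real.pi : ℂ) * (x : ℂ)) * (t : ℂ)) *
          Complex.exp (-(Real.pi : ℂ) * (t : ℂ) ^ 2) :=
        integral_congr_ae (Filter.Eventually.of_forall heq)
    _ = ((Real.pi : ℂ) / (Real.pi : ℂ)) ^ (1 / 2 : ℂ) *
          Complex.exp (-(2 * (Real.pi : ℂ) * (x : ℂ)) ^ 2 / (4 * (Real.pi : ℂ))) := h
    _ = Complex.exp (-(Real.pi : ℂ) * (x : ℂ) ^ 2) := by
        have hπ0 : (Real.pi : ℂ) ≠ 0 := Complex.ofReal_ne_zero.mpr Real.pi_ne_zero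
        rw [div_self hπ0, Complex.one_cpow, one_mul]
        congr 1
        field_simp
        ring

lemma weil_int3 (η : ℝ) (hη : η ≠ 0) :
    (∫ x : ℝ,
        (∫ t : ℝ, gaussianSchwartz t *
            Complex.exp (2 * (Real.pi : ℂ) * Complex.I * (t : ℂ) * (x : ℂ))) *
          Complex.exp (-(2 * (Real.pi : ℂ) * Complex.I * (x : ℂ) ^ 2 / (4 * (η : ℂ)))))
      = ((Real.pi : ℂ) / wb2 η) ^ (1 / 2 : ℂ) := by
  have hη' : (η : ℂ) ≠ 0 := Complex.ofReal_ne_zero.mpr hη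
  rw [← integral_gaussian_complex (wb2_re_pos η)]
  apply integral_congr_ae
  apply Filter.Eventually.of_forall
  intro x
  dsimp only
  rw [weil_int2 η x, ← Complex.exp_add]
  congr 1
  simp only [wb2]
  push_cast
  field_simp
  ring

lemma weil_key (η : ℝ) (hη : η ≠ 0) :
    ((Real.pi : ℂ) / wb1 η) ^ (1 / 2 : ℂ) =
      Complex.exp ((Real.pi : ℂ) * Complex.I * ((Real.sign η : ℝ) : ℂ) / 4) *
          ((|2 * η| ^ (-(1 / 2 : ℝ)) : ℝ) : ℂ) *
        ((Real.pi : ℂ) / wb2 η) ^ (1 / 2 : ℂ) := by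
  have hη' : (η : ℂ) ≠ 0 := Complex.ofReal_ne_zero.mpr hη
  have hπ0 : (Real.pi : ℂ) ≠ 0 := Complex.ofReal_ne_zero.mpr Real.pi_ne_zero
  have hb1 : wb1 η ≠ 0 := ne_zero_of_re_pos' (wb1_re_pos η)
  have hb2 : wb2 η ≠ 0 := ne_zero_of_re_pos' (wb2_re_pos η)
  have hu : 0 < ((Real.pi : ℂ) / wb1 η).re := div_pi_re_pos (wb1_re_pos η)
  have hv : 0 < ((Real.pi : ℂ) / wb2 η).re := div_pi_re_pos (wb2_re_pos η)
  have hB0 : ((Real.pi : ℂ) / wb2 η) ^ (1 / 2 : ℂ) ≠ 0 :=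
    ne_zero_of_re_pos' (re_cpow_half_pos hv)
  have habs : (0 : ℝ) < |2 * η| := abs_pos.mpr (mul_ne_zero two_ne_zero hη)
  have hr : (0 : ℝ) < |2 * η| ^ (-(1 / 2 : ℝ)) := Real.rpow_pos_of_pos habs _
  have hs : Real.sign η = 1 ∨ Real.sign η = -1 := by
    rcases hη.lt_or_gt with h | h
    · exact Or.inr (Real.sign_of_neg h)
    · exact Or.inl (Real.sign_of_pos h)
  -- the candidate value
  set w : ℂ := Complex.exp ((Real.pi : ℂ) * Complex.I * ((Real.sign η : ℝ) : ℂ) / 4) *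
      ((|2 * η| ^ (-(1 / 2 : ℝ)) : ℝ) : ℂ) with hw
  have hwre : 0 < w.re := by
    have hz : (Real.pi : ℂ) * Complex.I * ((Real.sign η : ℝ) : ℂ) / 4 =
        ((Real.pi * Real.sign η / 4 : ℝ) : ℂ) * Complex.I := by push_cast; ring
    rw [hw, mul_comm, Complex.re_ofReal_mul, hz, Complex.exp_ofReal_mul_I_re]
    apply mul_pos hr
    rcases hs with h | h
    · rw [h, show Real.pi * (1:ℝ) / 4 = Real.pi / 4 by ring, Real.cos_pi_div_four]
      positivity
    · rw [h, show Real.pi * (-1:ℝ) / 4 = -(Real.pi / 4) by ring, Real.cos_neg,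
        Real.cos_pi_div_four]
      positivity
  have hW : ((Real.pi : ℂ) / wb1 η) ^ (1 / 2 : ℂ) *
      (((Real.pi : ℂ) / wb2 η) ^ (1 / 2 : ℂ))⁻¹ = w := by
    apply sq_inj_re_pos _ (re_cpow_half_div_pos hu hv) hwre
    rw [mul_pow, inv_pow, cpow_half_sq, cpow_half_sq]
    have h2η : (2 : ℂ) * (η : ℂ) ≠ 0 := by simp [hη']
    have hleft : ((Real.pi : ℂ) / wb1 η) * (((Real.pi : ℂ) / wb2 η))⁻¹ =
        Complex.I / (2 * (η : ℂ)) := by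
      rw [inv_div, div_mul_div_comm, mul_comm (Real.pi : ℂ) (wb2 η),
        mul_div_mul_right _ _ hπ0, div_eq_div_iff hb1 h2η]
      simp only [wb1, wb2]
      push_cast
      field_simp
      linear_combination (2 : ℂ) * (η : ℂ) * Complex.I_sq
    rw [hleft, hw, mul_pow]
    have hrsq : (((|2 * η| ^ (-(1 / 2 : ℝ)) : ℝ) : ℂ)) ^ 2 = (((|2 * η|⁻¹ : ℝ)) : ℂ) := by
      rw [← Complex.ofReal_pow]
      congr 1
      rw [← Real.rpow_natCast (|2 * η| ^ (-(1 / 2 : ℝ))) 2, ← Real.rpow_mul habs.le]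
      norm_num [Real.rpow_neg_one]
    have hesq : Complex.exp ((Real.pi : ℂ) * Complex.I * ((Real.sign η : ℝ) : ℂ) / 4) ^ 2 =
        Complex.exp ((Real.pi : ℂ) * Complex.I * ((Real.sign η : ℝ) : ℂ) / 2) := by
      rw [sq, ← Complex.exp_add]
      congr 1
      ring
    rw [hrsq, hesq]
    rcases hη.lt_or_gt with hneg | hpos
    · rw [Real.sign_of_neg hneg, abs_of_neg (by linarith : 2 * η < 0)]
      have he : Complex.exp ((Real.pi : ℂ) * Complex.I * ((-1 : ℝ) : ℂ) / 2) = -Complex.I := by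
        rw [show (Real.pi : ℂ) * Complex.I * ((-1 : ℝ) : ℂ) / 2 = ((-(Real.pi/2) : ℝ) : ℂ) * Complex.I by
          push_cast; ring]
        rw [Complex.exp_mul_I, ← Complex.ofReal_cos, ← Complex.ofReal_sin]
        rw [Real.cos_neg, Real.sin_neg, Real.cos_pi_div_two, Real.sin_pi_div_two]
        push_cast; ring
      rw [he]
      push_cast
      field_simp
    · rw [Real.sign_of_pos hpos, abs_of_pos (by linarith : 0 < 2 * η)]
      have he : Complex.exp ((Real.pi : ℂ) * Complex.I * ((1 : ℝ) : ℂ) / 2) = Complex.I := by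
        rw [show (Real.pi : ℂ) * Complex.I * ((1 : ℝ) : ℂ) / 2 = (((Real.pi/2) : ℝ) : ℂ) * Complex.I by
          push_cast; ring]
        rw [Complex.exp_mul_I, ← Complex.ofReal_cos, ← Complex.ofReal_sin]
        rw [Real.cos_pi_div_two, Real.sin_pi_div_two]
        push_cast; ring
      rw [he]
      push_cast
      field_simp
  calc ((Real.pi : ℂ) / wb1 η) ^ (1 / 2 : ℂ)
      = (((Real.pi : ℂ) / wb1 η) ^ (1 / 2 : ℂ) *
          (((Real.pi : ℂ) / wb2 η) ^ (1 / 2 : ℂ))⁻¹) * ((Real.pi : ℂ) / wb2 η) ^ (1 / 2 : ℂ) := by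
        field_simp
    _ = w * ((Real.pi : ℂ) / wb2 η) ^ (1 / 2 : ℂ) := by rw [hW]

end

/-- For `F = ℝ` and `ψ(x) = e^{2πix}`, the Weil index — the 8th root of
unity `γ(ψ^η)` appearing in the Gaussian Fourier transform identity
`∫ φ(x)e^{2πiηx²}dx = γ(ψ^η)|2η|^{-1/2}∫ (Fφ)(x)e^{-2πix²/(4η)}dx` for Schwartz `φ`,
where `Fφ(x) = ∫ φ(t)e^{2πitx}dt` — satisfies `γ(ψ^η) = e^{πi·sgn(η)/4}`; in particular
`γ(ψ^η)` is a primitive 8th root of unity and `γ(ψ^η)·γ(ψ^{-η}) = 1`. -/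
theorem weil_index_real
    (γ : ℝ → ℂ)
    (hγ : ∀ η : ℝ, η ≠ 0 → ∀ φ : SchwartzMap ℝ ℂ,
      (∫ x : ℝ, φ x * Complex.exp (2 * (Real.pi : ℂ) * Complex.I * (η : ℂ) * (x : ℂ) ^ 2))
        = γ η * ((|2 * η| ^ (-(1 / 2 : ℝ)) : ℝ) : ℂ)
            * ∫ x : ℝ,
                (∫ t : ℝ, φ t * Complex.exp (2 * (Real.pi : ℂ) * Complex.I * (t : ℂ) * (x : ℂ)))
                  * Complex.exp (-(2 * (Real.pi : ℂ) * Complex.I * (x : ℂ) ^ 2 / (4 * (η : ℂ))))) :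
    ∀ η : ℝ, η ≠ 0 →
      γ η = Complex.exp ((Real.pi : ℂ) * Complex.I * (Real.sign η : ℂ) / 4) ∧
      IsPrimitiveRoot (γ η) 8 ∧
      γ η * γ (-η) = 1 := by

  have key : ∀ ζ : ℝ, ζ ≠ 0 →
      γ ζ = Complex.exp ((Real.pi : ℂ) * Complex.I * ((Real.sign ζ : ℝ) : ℂ) / 4) := by
    intro ζ hζ
    have E := hγ ζ hζ gaussianSchwartz
    rw [weil_int1 ζ, weil_int3 ζ hζ] at E
    have C := weil_key ζ hζ
    have hB0 : ((Real.pi : ℂ) / wb2 ζ) ^ (1 / 2 : ℂ) ≠ 0 :=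
      ne_zero_of_re_pos' (re_cpow_half_pos (div_pi_re_pos (wb2_re_pos ζ)))
    have habs : (0 : ℝ) < |2 * ζ| := abs_pos.mpr (mul_ne_zero two_ne_zero hζ)
    have hr0 : ((|2 * ζ| ^ (-(1 / 2 : ℝ)) : ℝ) : ℂ) ≠ 0 :=
      Complex.ofReal_ne_zero.mpr (ne_of_gt (Real.rpow_pos_of_pos habs _))
    have h2 := mul_right_cancel₀ hB0 (E.symm.trans C)
    exact mul_right_cancel₀ hr0 h2
  intro η hη
  refine ⟨key η hη, ?_, ?_⟩
  · rw [key η hη]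
    rcases hη.lt_or_gt with hneg | hpos
    · rw [Real.sign_of_neg hneg]
      have h7 := Complex.isPrimitiveRoot_exp_of_coprime 7 8 (by norm_num) (by norm_num)
      have heq : (Real.pi : ℂ) * Complex.I * ((-1 : ℝ) : ℂ) / 4 =
          2 * (Real.pi : ℂ) * Complex.I * (((7 : ℕ) : ℂ) / ((8 : ℕ) : ℂ)) -
            2 * (Real.pi : ℂ) * Complex.I := by
        push_cast; ring
      rw [heq, Complex.exp_sub, Complex.exp_two_pi_mul_I, div_one]
      exact h7
    · rw [Real.sign_of_pos hpos]
      have h1 := Complex.isPrimitiveRoot_exp 8 (by norm_num)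
      have heq : (Real.pi : ℂ) * Complex.I * ((1 : ℝ) : ℂ) / 4 =
          2 * (Real.pi : ℂ) * Complex.I / ((8 : ℕ) : ℂ) := by
        push_cast; ring
      rw [heq]
      exact h1
  · rw [key η hη, key (-η) (neg_ne_zero.mpr hη), ← Complex.exp_add, Real.sign_neg]
    have heq : (Real.pi : ℂ) * Complex.I * ((Real.sign η : ℝ) : ℂ) / 4 +
        (Real.pi : ℂ) * Complex.I * ((-Real.sign η : ℝ) : ℂ) / 4 = 0 := by
      push_cast; ring
    rw [heq, Complex.exp_zero]
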